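/- Let p be a prime and A a commutative ring on which multiplication by p is injective, equipped with a ring endomorphism φ : A → A satisfying φ(a) ≡ a^p (mod pA) for all a, and assume that R = A/pA is perfect (its Frobenius x ↦ x^p is bijective). Let f : A → 𝕎 A be the unique ring homomorphism with w_n(f(a)) = φ^n(a) for all n, a, and q : A → A/pA the quotient map. Then for every n ≥ 1 the composite truncate_n ∘ 𝕎(q) ∘ f : A → W_n(A/pA) is surjective with kernel p^n A, inducing a ring isomorphism A/p^nA ≅ W_n(A/pA); hence the p-adic completion of A is isomorphic as a topological ring to 𝕎(A/pA). -/

import Mathlib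

noncomputable section

/-- The `n`-th ghost component of a `p`-typical Witt vector:
`w_n(x) = ∑_{i=0}^{n} p^i x_i^{p^{n-i}}`. -/
def ghost (p : ℕ) {A : Type*} [CommRing A] (n : ℕ) (x : WittVector p A) : A :=
  ∑ i ∈ Finset.range (n + 1), (p : A) ^ i * (x.coeff i) ^ (p ^ (n - i))

/-- The inverse limit `lim_n A ⧸ I n` as a subring of the product. -/
def invLimQuot {A : Type*} [CommRing A] (I : ℕ → Ideal A) :
    Subring (∀ n : ℕ, A ⧸ I n) where
  carrier := {x | ∀ (n m : ℕ), n ≤ m → ∀ (hle : I m ≤ I n),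
    Ideal.Quotient.factor hle (x m) = x n}
  zero_mem' := by intro n m h hle; simp
  one_mem' := by intro n m h hle; simp
  add_mem' := by
    intro a b ha hb n m h hle
    simp only [Pi.add_apply, map_add, ha n m h hle, hb n m h hle]
  mul_mem' := by
    intro a b ha hb n m h hle
    simp only [Pi.mul_apply, map_mul, ha n m h hle, hb n m h hle]
  neg_mem' := by
    intro a ha n m h hle
    simp only [Pi.neg_apply, map_neg, ha n m h hle]

/-- Product of discrete topologies. -/
def discPiTop (ι : Type*) (X : ι → Type*) : TopologicalSpace (∀ i, X i) :=
  @Pi.topologicalSpace ι X fun _ => ⊥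

/-- The projective limit topology on `lim_n A ⧸ I n` (each quotient discrete). -/
def limTop {A : Type*} [CommRing A] (I : ℕ → Ideal A) :
    TopologicalSpace (invLimQuot I) :=
  TopologicalSpace.induced Subtype.val (discPiTop ℕ fun n => A ⧸ I n)

/-- The natural topology on `𝕎 R` (`R` discrete): the product topology via
the coefficient map `𝕎 R → R^ℕ`. -/
def wittTop (p : ℕ) (R : Type*) [CommRing R] : TopologicalSpace (WittVector p R) :=
  TopologicalSpace.induced (fun x => x.coeff) (discPiTop ℕ fun _ => R)

/-! For a perfect ring `R` of characteristic `p`, `p = V ∘ F` on `𝕎 R` with `V` and `F`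
injective, so `p` is a non-zero-divisor on `𝕎 R` and `p ^ n ∣ x` exactly when the first `n`
coordinates of `x` vanish. Since `w₀ (f a) = a`, the zeroth coordinate of `g a = 𝕎(q) (f a)`
is `q a`; hence `g` is surjective modulo `p` and `g a ∈ p 𝕎 R` only for `a ∈ p A`. As `p` is
regular on `𝕎 R`, both statements pass from `p` to `p ^ n` by induction, which identifies
`A ⧸ p ^ n A` with `W_n (A ⧸ p A)`. These isomorphisms are compatible with truncation, so they
assemble, through the universal property of `𝕎` as a limit of truncated Witt vectors, into an
isomorphism of the limit with `𝕎 (A ⧸ p A)`; it is a homeomorphism because every coordinate on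
either side depends on only finitely many coordinates on the other.
-/

section DvdLift

variable {A B : Type*} [CommRing A] [CommRing B] (g : A →+* B) {x : A}

theorem pow_dvd_map_iff (hreg : IsLeftRegular (g x)) (hdvd : ∀ a, g x ∣ g a → x ∣ a)
    (n : ℕ) {a : A} : g x ^ n ∣ g a ↔ x ^ n ∣ a := by
  refine ⟨fun ha => ?_, fun ha => map_pow g x n ▸ map_dvd g ha⟩
  induction n generalizing a with
  | zero => simp
  | succ n ih =>
    obtain ⟨c, rfl⟩ := hdvd a ((dvd_pow_self _ n.succ_ne_zero).trans ha)
    rw [map_mul, pow_succ', hreg.dvd_cancel_left] at ha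
    rw [pow_succ']
    exact mul_dvd_mul_left x (ih ha)

theorem exists_pow_dvd_sub_map (hsurj : ∀ b, ∃ a, g x ∣ b - g a) (n : ℕ) (b : B) :
    ∃ a, g x ^ n ∣ b - g a := by
  induction n with
  | zero => exact ⟨0, by simp⟩
  | succ n ih =>
    obtain ⟨a, c, hc⟩ := ih
    obtain ⟨a', d, hd⟩ := hsurj c
    refine ⟨a + x ^ n * a', d, ?_⟩
    rw [map_add, map_mul, map_pow]
    linear_combination hc + g x ^ n * hd

end DvdLift

namespace WittVector

variable {p : ℕ} [Fact p.Prime] {R : Type*} [CommRing R] [CharP R p] [PerfectRing R p]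

theorem natCast_pow_dvd_iff {n : ℕ} {x : WittVector p R} :
    (p : WittVector p R) ^ n ∣ x ↔ ∀ i < n, x.coeff i = 0 := by
  constructor
  · rintro ⟨y, rfl⟩ i hi
    rw [mul_comm]
    exact mul_pow_charP_coeff_zero y hi
  · intro hx
    obtain ⟨y, hy⟩ := (frobenius_bijective p R).iterate n |>.2 (x.shift n)
    refine ⟨y, ?_⟩
    rw [eq_iterate_verschiebung hx, ← hy, iterate_verschiebung_iterate_frobenius, mul_comm]

theorem natCast_dvd_iff {x : WittVector p R} : (p : WittVector p R) ∣ x ↔ x.coeff 0 = 0 := by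
  simpa using natCast_pow_dvd_iff (n := 1) (x := x)

theorem isLeftRegular_natCast : IsLeftRegular (p : WittVector p R) := by
  intro a b hab
  simp only [mul_comm (p : WittVector p R), ← verschiebung_frobenius] at hab
  exact (frobenius_bijective p R).1 (verschiebung_injective p R hab)

section

variable {A : Type*} [CommRing A] {q : A →+* R} {g : A →+* WittVector p R}
  (hg : ∀ a, (g a).coeff 0 = q a)
include hg

theorem ker_truncate_comp (hker : RingHom.ker q = Ideal.span {(p : A)}) (n : ℕ) :
    RingHom.ker ((truncate (p := p) n).comp g) = Ideal.span {(p : A)} ^ n := by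
  have hreg : IsLeftRegular (g p) := (map_natCast g p).symm ▸ isLeftRegular_natCast
  have hdvd (a : A) (ha : g p ∣ g a) : (p : A) ∣ a := by
    rwa [map_natCast, natCast_dvd_iff, hg, ← RingHom.mem_ker, hker,
      Ideal.mem_span_singleton] at ha
  ext a
  rw [RingHom.mem_ker, RingHom.comp_apply, ← RingHom.mem_ker, mem_ker_truncate,
    ← natCast_pow_dvd_iff, Ideal.span_singleton_pow, Ideal.mem_span_singleton,
    ← map_natCast g p]
  exact pow_dvd_map_iff g hreg hdvd n

theorem surjective_truncate_comp (hq : Function.Surjective q) (n : ℕ) :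
    Function.Surjective ((truncate (p := p) n).comp g) := by
  have hmodp (b : WittVector p R) : ∃ a, g p ∣ b - g a := by
    obtain ⟨a, ha⟩ := hq (b.coeff 0)
    refine ⟨a, ?_⟩
    rw [map_natCast, natCast_dvd_iff, ← constantCoeff_apply, map_sub, constantCoeff_apply,
      constantCoeff_apply, hg, ha, sub_self]
  intro y
  obtain ⟨b, rfl⟩ := truncate_surjective (p := p) n R y
  obtain ⟨a, ha⟩ := exists_pow_dvd_sub_map g hmodp n b
  rw [map_natCast, natCast_pow_dvd_iff, ← mem_ker_truncate, RingHom.mem_ker, map_sub,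
    sub_eq_zero] at ha
  exact ⟨a, ha.symm⟩

end

variable {A : Type*} [CommRing A] [PerfectRing (A ⧸ Ideal.span {(p : A)}) p]
  {g : A →+* WittVector p (A ⧸ Ideal.span {(p : A)})}

theorem surjective_truncate_comp_and_ker_eq_of_coeff_zero
    (hg : ∀ a, (g a).coeff 0 = Ideal.Quotient.mk _ a) (n : ℕ) :
    Function.Surjective ((truncate (p := p) n).comp g) ∧
      RingHom.ker ((truncate (p := p) n).comp g) = Ideal.span {(p : A)} ^ n := by
  by_cases hunit : IsUnit (p : A)
  · have htop : Ideal.span {(p : A)} = ⊤ := Ideal.span_singleton_eq_top.2 hunit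
    have : Subsingleton (A ⧸ Ideal.span {(p : A)}) := Ideal.Quotient.subsingleton_iff.2 htop
    have : Subsingleton (TruncatedWittVector p n (A ⧸ Ideal.span {(p : A)})) :=
      ⟨fun _ _ => TruncatedWittVector.ext fun _ => Subsingleton.elim _ _⟩
    have hker_top : RingHom.ker ((truncate (p := p) n).comp g) = ⊤ :=
      eq_top_iff.2 fun _ _ => Subsingleton.elim _ _
    refine ⟨fun _ => ⟨0, Subsingleton.elim _ _⟩, hker_top.trans ?_⟩
    rw [htop, Ideal.top_pow]
  · have := CharP.quotient A p hunit
    exact ⟨surjective_truncate_comp hg Ideal.Quotient.mk_surjective n,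
      ker_truncate_comp hg Ideal.mk_ker n⟩

end WittVector

section Topology

variable {X : Type*} [TopologicalSpace X]

theorem continuous_wittTop_of_isLocallyConstant_coeff {p : ℕ} {R : Type*} [CommRing R]
    {F : X → WittVector p R} (hF : ∀ i, IsLocallyConstant fun x => (F x).coeff i) :
    @Continuous X _ _ (wittTop p R) F := by
  let : TopologicalSpace R := ⊥
  have : DiscreteTopology R := ⟨rfl⟩
  exact continuous_induced_rng.2 (continuous_pi fun i => (hF i).continuous)

theorem continuous_limTop_of_isLocallyConstant_eval {A : Type*} [CommRing A] {I : ℕ → Ideal A}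
    {F : X → invLimQuot I} (hF : ∀ n, IsLocallyConstant fun x => (F x).1 n) :
    @Continuous X _ _ (limTop I) F := by
  let : ∀ n, TopologicalSpace (A ⧸ I n) := fun _ => ⊥
  have : ∀ n, DiscreteTopology (A ⧸ I n) := fun _ => ⟨rfl⟩
  exact continuous_induced_rng.2 (continuous_pi fun n => (hF n).continuous)

theorem isLocallyConstant_limTop_eval {A : Type*} [CommRing A] (I : ℕ → Ideal A) (n : ℕ) :
    @IsLocallyConstant _ _ (limTop I) fun x : invLimQuot I => x.1 n := by
  let : ∀ n, TopologicalSpace (A ⧸ I n) := fun _ => ⊥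
  have : ∀ n, DiscreteTopology (A ⧸ I n) := fun _ => ⟨rfl⟩
  let := limTop I
  exact (IsLocallyConstant.iff_continuous _).2
    ((continuous_apply n).comp continuous_subtype_val)

theorem isLocallyConstant_wittTop_truncate (p : ℕ) [Fact p.Prime] (R : Type*) [CommRing R]
    (n : ℕ) :
    @IsLocallyConstant _ _ (wittTop p R) (WittVector.truncate (p := p) (R := R) n) := by
  let : TopologicalSpace R := ⊥
  have : DiscreteTopology R := ⟨rfl⟩
  let := wittTop p R
  have hcoeffs : Continuous fun w : WittVector p R => fun j : Fin n => w.coeff j :=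
    continuous_pi fun j => (continuous_apply (j : ℕ)).comp continuous_induced_dom
  convert ((IsLocallyConstant.iff_continuous _).2 hcoeffs).comp (TruncatedWittVector.mk p)
  funext w
  exact TruncatedWittVector.ext fun j => by
    rw [WittVector.coeff_truncate, Function.comp_apply, TruncatedWittVector.coeff_mk]

end Topology

namespace WittVector

variable {p : ℕ} [Fact p.Prime] {A R : Type*} [CommRing A] [CommRing R]

theorem eq_of_truncate_succ_eq {x y : WittVector p R}
    (h : ∀ n, truncate (n + 1) x = truncate (n + 1) y) : x = y := by
  ext i
  simpa only [coeff_truncate, Fin.val_last] using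
    congrArg (TruncatedWittVector.coeff (Fin.last i)) (h i)

variable {g : A →+* WittVector p R} {J : ℕ → Ideal A}
  (hsurj : ∀ n, Function.Surjective ((truncate (p := p) n).comp g))
  (hker : ∀ n, RingHom.ker ((truncate (p := p) n).comp g) = J n)

include hker in
theorem antitone_of_ker_truncate_comp_eq : Antitone J := by
  intro n m h a ha
  rw [← hker, RingHom.mem_ker, RingHom.comp_apply] at ha ⊢
  rw [← TruncatedWittVector.truncate_wittVector_truncate h, ha, map_zero]

def quotientEquivTruncated (n : ℕ) : A ⧸ J n ≃+* TruncatedWittVector p n R :=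
  (Ideal.quotEquivOfEq (hker n).symm).trans (RingHom.quotientKerEquivOfSurjective (hsurj n))

theorem quotientEquivTruncated_mk (n : ℕ) (a : A) :
    quotientEquivTruncated hsurj hker n (Ideal.Quotient.mk (J n) a) = truncate n (g a) :=
  RingHom.quotientKerEquivOfSurjective_apply_mk (hsurj n) a

theorem truncate_quotientEquivTruncated {n m : ℕ} (h : n ≤ m) (hle : J m ≤ J n)
    (x : A ⧸ J m) :
    TruncatedWittVector.truncate h (quotientEquivTruncated hsurj hker m x) =
      quotientEquivTruncated hsurj hker n (Ideal.Quotient.factor hle x) := by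
  obtain ⟨a, rfl⟩ := Ideal.Quotient.mk_surjective x
  rw [Ideal.Quotient.factor_mk, quotientEquivTruncated_mk, quotientEquivTruncated_mk,
    TruncatedWittVector.truncate_wittVector_truncate]

theorem truncate_quotientEquivTruncated_invLimQuot (x : invLimQuot fun n => J (n + 1))
    {n m : ℕ} (h : n ≤ m) :
    TruncatedWittVector.truncate (Nat.succ_le_succ h)
        (quotientEquivTruncated hsurj hker (m + 1) (x.1 m)) =
      quotientEquivTruncated hsurj hker (n + 1) (x.1 n) := by
  have hle := antitone_of_ker_truncate_comp_eq hker (Nat.succ_le_succ h)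
  rw [truncate_quotientEquivTruncated hsurj hker _ hle, x.2 n m h hle]

def liftInvLimQuot : invLimQuot (fun n => J (n + 1)) →+* WittVector p R :=
  lift (fun k => (TruncatedWittVector.truncate k.le_succ).comp
      ((quotientEquivTruncated hsurj hker (k + 1)).toRingHom.comp
        ((Pi.evalRingHom (fun n => A ⧸ J (n + 1)) k).comp (Subring.subtype _))))
    fun k₁ k₂ hk => RingHom.ext fun x => by
      simp only [RingHom.comp_apply, TruncatedWittVector.truncate_truncate]
      rw [← TruncatedWittVector.truncate_truncate k₁.le_succ (Nat.succ_le_succ hk)]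
      exact congrArg (TruncatedWittVector.truncate k₁.le_succ)
        (truncate_quotientEquivTruncated_invLimQuot hsurj hker x hk)

theorem truncate_succ_liftInvLimQuot (x : invLimQuot fun n => J (n + 1)) (n : ℕ) :
    truncate (n + 1) (liftInvLimQuot hsurj hker x) =
      quotientEquivTruncated hsurj hker (n + 1) (x.1 n) := by
  rw [liftInvLimQuot, truncate_lift]
  exact truncate_quotientEquivTruncated_invLimQuot hsurj hker x n.le_succ

def toInvLimQuot : WittVector p R →+* invLimQuot (fun n => J (n + 1)) :=
  RingHom.codRestrict
    (RingHom.pi fun n => (quotientEquivTruncated hsurj hker (n + 1)).symm.toRingHom.comp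
      (truncate (n + 1)))
    _ fun w n m h hle => (quotientEquivTruncated hsurj hker (n + 1)).injective <| by
      simp only [RingHom.pi_apply, RingHom.comp_apply, RingEquiv.toRingHom_eq_coe,
        RingHom.coe_coe]
      rw [← truncate_quotientEquivTruncated hsurj hker (Nat.succ_le_succ h),
        RingEquiv.apply_symm_apply, RingEquiv.apply_symm_apply,
        TruncatedWittVector.truncate_wittVector_truncate]

theorem toInvLimQuot_apply_coe (w : WittVector p R) (n : ℕ) :
    (toInvLimQuot hsurj hker w).1 n =
      (quotientEquivTruncated hsurj hker (n + 1)).symm (truncate (n + 1) w) :=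
  rfl

def invLimQuotEquiv : invLimQuot (fun n => J (n + 1)) ≃+* WittVector p R :=
  RingEquiv.ofRingHom (liftInvLimQuot hsurj hker) (toInvLimQuot hsurj hker)
    (RingHom.ext fun w => eq_of_truncate_succ_eq fun n => by
      simp only [RingHom.comp_apply, truncate_succ_liftInvLimQuot, toInvLimQuot_apply_coe,
        RingEquiv.apply_symm_apply, RingHom.id_apply])
    (RingHom.ext fun x => Subtype.ext <| funext fun n => by
      simp only [RingHom.comp_apply, toInvLimQuot_apply_coe, truncate_succ_liftInvLimQuot,
        RingEquiv.symm_apply_apply, RingHom.id_apply])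

theorem truncate_succ_invLimQuotEquiv (x : invLimQuot fun n => J (n + 1)) (n : ℕ) :
    truncate (n + 1) (invLimQuotEquiv hsurj hker x) =
      quotientEquivTruncated hsurj hker (n + 1) (x.1 n) :=
  truncate_succ_liftInvLimQuot hsurj hker x n

theorem invLimQuotEquiv_mk (a : A) (h) :
    invLimQuotEquiv hsurj hker ⟨fun n => Ideal.Quotient.mk (J (n + 1)) a, h⟩ = g a :=
  eq_of_truncate_succ_eq fun n => by
    rw [truncate_succ_invLimQuotEquiv, quotientEquivTruncated_mk]

theorem continuous_invLimQuotEquiv :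
    @Continuous _ _ (limTop fun n => J (n + 1)) (wittTop p R) (invLimQuotEquiv hsurj hker) := by
  let := limTop fun n => J (n + 1)
  refine continuous_wittTop_of_isLocallyConstant_coeff fun i => ?_
  have hcoeff : (fun x => (invLimQuotEquiv hsurj hker x).coeff i) =
      (fun y => (quotientEquivTruncated hsurj hker (i + 1) y).coeff (Fin.last i)) ∘
        fun x => x.1 i := by
    funext x
    rw [Function.comp_apply, ← truncate_succ_invLimQuotEquiv, coeff_truncate, Fin.val_last]
  rw [hcoeff]
  exact (isLocallyConstant_limTop_eval (fun n => J (n + 1)) i).comp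
    fun y => (quotientEquivTruncated hsurj hker (i + 1) y).coeff (Fin.last i)

theorem continuous_invLimQuotEquiv_symm :
    @Continuous _ _ (wittTop p R) (limTop fun n => J (n + 1))
      (invLimQuotEquiv hsurj hker).symm := by
  let := wittTop p R
  exact continuous_limTop_of_isLocallyConstant_eval fun n =>
    (isLocallyConstant_wittTop_truncate p R (n + 1)).comp
      (quotientEquivTruncated hsurj hker (n + 1)).symm

end WittVector

/-- Let `p` be prime and `A` a commutative ring on which multiplication by
`p` is injective, with a Frobenius lift `φ`, such that `R = A/pA` is perfect.
Let `f : A → 𝕎 A` be the unique ring homomorphism with `w_n(f a) = φ^n(a)`.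
Then for every `n ≥ 1` the composite `truncate_n ∘ 𝕎(q) ∘ f : A → W_n(A/pA)`
is surjective with kernel `p^n A`, inducing `A/p^nA ≅ W_n(A/pA)`; hence the
`p`-adic completion of `A` is isomorphic as a topological ring to
`𝕎(A/pA)`. -/
theorem statement13 (p : ℕ) [Fact p.Prime] (A : Type*) [CommRing A]
    (φ : A →+* A)
    (hperfect : Function.Bijective
      fun x : A ⧸ Ideal.span {(p : A)} => x ^ p)
    (f : A →+* WittVector p A)
    (hf : ∀ (n : ℕ) (a : A), ghost p n (f a) = (⇑φ)^[n] a) :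
    (∀ n : ℕ, 1 ≤ n →
      Function.Surjective ((WittVector.truncate n).comp
        ((WittVector.map (Ideal.Quotient.mk (Ideal.span {(p : A)}))).comp f)) ∧
      RingHom.ker ((WittVector.truncate n).comp
        ((WittVector.map (Ideal.Quotient.mk (Ideal.span {(p : A)}))).comp f)) =
        Ideal.span {(p : A)} ^ n) ∧
    (∀ n : ℕ, 1 ≤ n →
      ∃ e : (A ⧸ Ideal.span {(p : A)} ^ n) ≃+*
          TruncatedWittVector p n (A ⧸ Ideal.span {(p : A)}),
        ∀ a : A, e (Ideal.Quotient.mk (Ideal.span {(p : A)} ^ n) a) =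
          WittVector.truncate n
            (WittVector.map (Ideal.Quotient.mk (Ideal.span {(p : A)})) (f a))) ∧
    (∃ e : invLimQuot (fun n => Ideal.span {(p : A)} ^ (n + 1)) ≃+*
        WittVector p (A ⧸ Ideal.span {(p : A)}),
      @Continuous _ _ (limTop fun n => Ideal.span {(p : A)} ^ (n + 1))
        (wittTop p (A ⧸ Ideal.span {(p : A)})) e ∧
      @Continuous _ _ (wittTop p (A ⧸ Ideal.span {(p : A)}))
        (limTop fun n => Ideal.span {(p : A)} ^ (n + 1)) e.symm ∧
      ∀ a : A,
        e ⟨fun n => Ideal.Quotient.mk (Ideal.span {(p : A)} ^ (n + 1)) a,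
            by intro n m h hle; simp⟩ =
          WittVector.map (Ideal.Quotient.mk (Ideal.span {(p : A)})) (f a)) := by
  have : PerfectRing (A ⧸ Ideal.span {(p : A)}) p := ⟨hperfect⟩
  have hcoeff (a : A) : ((WittVector.map (Ideal.Quotient.mk _)).comp f a).coeff 0 =
      Ideal.Quotient.mk (Ideal.span {(p : A)}) a := by
    rw [RingHom.comp_apply, WittVector.map_coeff]
    congr 1
    simpa [ghost] using hf 0 a
  have hsurj n := (WittVector.surjective_truncate_comp_and_ker_eq_of_coeff_zero hcoeff n).1
  have hker n := (WittVector.surjective_truncate_comp_and_ker_eq_of_coeff_zero hcoeff n).2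
  exact ⟨fun n _ => ⟨hsurj n, hker n⟩,
    fun n _ => ⟨WittVector.quotientEquivTruncated hsurj hker n,
      WittVector.quotientEquivTruncated_mk hsurj hker n⟩,
    WittVector.invLimQuotEquiv hsurj hker, WittVector.continuous_invLimQuotEquiv hsurj hker,
    WittVector.continuous_invLimQuotEquiv_symm hsurj hker,
    fun a => WittVector.invLimQuotEquiv_mk hsurj hker a _⟩
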